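/- arXiv:2503.19523 — 2 statements merged into one kernel-verified Lean document; each statement's English description precedes it below -/
import Mathlib

section
/- Performance difference identity: for any two stationary policies π_new and π_old on a finite MDP with discount γ ∈ [0,1) and initial distribution d₀, J(π_new) = J(π_old) + E_{τ∼π_new}[∑_{t=0}^∞ γ^t A^{π_old}(s_t, a_t)], where the trajectory τ is generated by starting from s₀ ∼ d₀ and following π_new. Equivalently, J(π_new) − J(π_old) = ∑_s ρ_{π_new}(s) ∑_a π_new(a|s) A^{π_old}(s,a), where ρ_{π_new}(s) = ∑_{t≥0} γ^t Pr(s_t = s under π_new, s₀∼d₀). -/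
open scoped BigOperators

/-- The one-step expectation operator of policy `π` in an MDP with transition kernel `P`:
`(expOp P π f)(s,a) = ∑_{s'} P(s'|s,a) ∑_{a'} π(a'|s') f(s',a')`. -/
noncomputable def expOp {S A : Type*} [Fintype S] [Fintype A]
    (P : S → A → S → ℝ) (π : S → A → ℝ) (f : S → A → ℝ) : S → A → ℝ :=
  fun s a => ∑ s', P s a s' * ∑ a', π s' a' * f s' a'

/-- The state-action value function `Q^π(s,a)`, the expected discounted sum of rewards
`∑_{k≥0} γ^k r(s_k, a_k)` starting from `(s,a)` and following `π`, written via the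
`k`-step expectation operators: `Q^π = ∑_{k≥0} γ^k (expOp^k r)`. -/
noncomputable def Qval {S A : Type*} [Fintype S] [Fintype A]
    (γ : ℝ) (P : S → A → S → ℝ) (π : S → A → ℝ) (r : S → A → ℝ) : S → A → ℝ :=
  fun s a => ∑' k : ℕ, γ ^ k * ((expOp P π)^[k] r) s a

/-- The state value function `V^π(s) = ∑_a π(a|s) Q^π(s,a)`. -/
noncomputable def Vval {S A : Type*} [Fintype S] [Fintype A]
    (γ : ℝ) (P : S → A → S → ℝ) (π : S → A → ℝ) (r : S → A → ℝ) : S → ℝ :=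
  fun s => ∑ a, π s a * Qval γ P π r s a

/-- The advantage function `A^π(s,a) = Q^π(s,a) − V^π(s)`. -/
noncomputable def Adv {S A : Type*} [Fintype S] [Fintype A]
    (γ : ℝ) (P : S → A → S → ℝ) (π : S → A → ℝ) (r : S → A → ℝ) : S → A → ℝ :=
  fun s a => Qval γ P π r s a - Vval γ P π r s

/-- The state transition matrix induced by policy `π`. -/
noncomputable def Pmat {S A : Type*} [Fintype S] [Fintype A]
    (P : S → A → S → ℝ) (π : S → A → ℝ) : Matrix S S ℝ :=
  fun s s' => ∑ a, π s a * P s a s'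

/-- The (unnormalized) discounted state visitation measure
`ρ_π(s) = ∑_{k≥0} γ^k Pr_π(s_k = s | s₀ ∼ d₀)`. -/
noncomputable def occup {S A : Type*} [Fintype S] [Fintype A] [DecidableEq S]
    (γ : ℝ) (P : S → A → S → ℝ) (π : S → A → ℝ) (d0 : S → ℝ) : S → ℝ :=
  fun s => ∑' k : ℕ, γ ^ k * ∑ s0, d0 s0 * (Pmat P π ^ k) s0 s

/-- The expected return `J(π) = E_{s₀∼d₀}[V^π(s₀)]`. -/
noncomputable def Jfun {S A : Type*} [Fintype S] [Fintype A]
    (γ : ℝ) (P : S → A → S → ℝ) (π : S → A → ℝ) (r : S → A → ℝ) (d0 : S → ℝ) : ℝ :=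
  ∑ s, d0 s * Vval γ P π r s

section aux
variable {S A : Type*} [Fintype S] [Fintype A]

lemma expOp_abs_le (P : S → A → S → ℝ) (π : S → A → ℝ)
    (hP0 : ∀ s a s', 0 ≤ P s a s') (hP1 : ∀ s a, ∑ s', P s a s' = 1)
    (hπ0 : ∀ s a, 0 ≤ π s a) (hπ1 : ∀ s, ∑ a, π s a = 1)
    (f : S → A → ℝ) (C : ℝ) (hf : ∀ s a, |f s a| ≤ C) :
    ∀ s a, |expOp P π f s a| ≤ C := by
  intro s a
  have h1 : ∀ s', |∑ a', π s' a' * f s' a'| ≤ C := by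
    intro s'
    calc |∑ a', π s' a' * f s' a'| ≤ ∑ a', |π s' a' * f s' a'| :=
          Finset.abs_sum_le_sum_abs _ _
    _ ≤ ∑ a', π s' a' * C := by
        apply Finset.sum_le_sum; intro a' _
        rw [abs_mul, abs_of_nonneg (hπ0 s' a')]
        exact mul_le_mul_of_nonneg_left (hf s' a') (hπ0 s' a')
    _ = C := by rw [← Finset.sum_mul, hπ1, one_mul]
  show |∑ s', P s a s' * ∑ a', π s' a' * f s' a'| ≤ C
  calc |∑ s', P s a s' * ∑ a', π s' a' * f s' a'|
      ≤ ∑ s', |P s a s' * ∑ a', π s' a' * f s' a'| := Finset.abs_sum_le_sum_abs _ _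
  _ ≤ ∑ s', P s a s' * C := by
      apply Finset.sum_le_sum; intro s' _
      rw [abs_mul, abs_of_nonneg (hP0 s a s')]
      exact mul_le_mul_of_nonneg_left (h1 s') (hP0 s a s')
  _ = C := by rw [← Finset.sum_mul, hP1, one_mul]

lemma iterate_abs_le (P : S → A → S → ℝ) (π : S → A → ℝ)
    (hP0 : ∀ s a s', 0 ≤ P s a s') (hP1 : ∀ s a, ∑ s', P s a s' = 1)
    (hπ0 : ∀ s a, 0 ≤ π s a) (hπ1 : ∀ s, ∑ a, π s a = 1)
    (r : S → A → ℝ) (C : ℝ) (hC : ∀ s a, |r s a| ≤ C) :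
    ∀ k s a, |((expOp P π)^[k] r) s a| ≤ C := by
  intro k
  induction k with
  | zero => simpa using hC
  | succ k ih =>
    intro s a
    rw [Function.iterate_succ_apply']
    exact expOp_abs_le P π hP0 hP1 hπ0 hπ1 _ C ih s a

lemma summable_Qterm (γ : ℝ) (hγ0 : 0 ≤ γ) (hγ1 : γ < 1)
    (P : S → A → S → ℝ) (π : S → A → ℝ)
    (hP0 : ∀ s a s', 0 ≤ P s a s') (hP1 : ∀ s a, ∑ s', P s a s' = 1)
    (hπ0 : ∀ s a, 0 ≤ π s a) (hπ1 : ∀ s, ∑ a, π s a = 1)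
    (r : S → A → ℝ) (s : S) (a : A) :
    Summable (fun k : ℕ => γ ^ k * ((expOp P π)^[k] r) s a) := by
  set C : ℝ := ∑ s, ∑ a, |r s a| with hCdef
  have hC : ∀ s a, |r s a| ≤ C := by
    intro s a
    calc |r s a| ≤ ∑ a', |r s a'| :=
          Finset.single_le_sum (f := fun a' => |r s a'|) (fun a' _ => abs_nonneg _)
            (Finset.mem_univ a)
    _ ≤ C := Finset.single_le_sum (f := fun s' => ∑ a', |r s' a'|)
          (fun s' _ => Finset.sum_nonneg fun a' _ => abs_nonneg _) (Finset.mem_univ s)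
  apply Summable.of_norm_bounded (g := fun k => γ ^ k * C)
    ((summable_geometric_of_lt_one hγ0 hγ1).mul_right C)
  intro k
  rw [Real.norm_eq_abs, abs_mul, abs_pow, abs_of_nonneg hγ0]
  exact mul_le_mul_of_nonneg_left (iterate_abs_le P π hP0 hP1 hπ0 hπ1 r C hC k s a)
    (pow_nonneg hγ0 k)

end aux

section bellman
variable {S A : Type*} [Fintype S] [Fintype A]

lemma Qval_bellman (γ : ℝ) (hγ0 : 0 ≤ γ) (hγ1 : γ < 1)
    (P : S → A → S → ℝ) (π : S → A → ℝ)
    (hP0 : ∀ s a s', 0 ≤ P s a s') (hP1 : ∀ s a, ∑ s', P s a s' = 1)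
    (hπ0 : ∀ s a, 0 ≤ π s a) (hπ1 : ∀ s, ∑ a, π s a = 1)
    (r : S → A → ℝ) (s : S) (a : A) :
    Qval γ P π r s a = r s a + γ * ∑ s', P s a s' * Vval γ P π r s' := by
  have hsum : ∀ s a, Summable (fun k : ℕ => γ ^ k * ((expOp P π)^[k] r) s a) :=
    fun s a => summable_Qterm γ hγ0 hγ1 P π hP0 hP1 hπ0 hπ1 r s a
  have h0 : Qval γ P π r s a
      = r s a + ∑' k : ℕ, γ ^ (k + 1) * ((expOp P π)^[k + 1] r) s a := by
    rw [show Qval γ P π r s a = ∑' k : ℕ, γ ^ k * ((expOp P π)^[k] r) s a from rfl,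
      Summable.tsum_eq_zero_add (hsum s a)]
    simp
  rw [h0]
  congr 1
  have hterm : ∀ k : ℕ, γ ^ (k + 1) * ((expOp P π)^[k + 1] r) s a
      = ∑ s', ∑ a', (γ * (P s a s' * π s' a'))
          * (γ ^ k * ((expOp P π)^[k] r) s' a') := by
    intro k
    rw [Function.iterate_succ_apply']
    show γ ^ (k + 1) * ∑ s', P s a s' * ∑ a', π s' a' * ((expOp P π)^[k] r) s' a' = _
    simp only [Finset.mul_sum]
    refine Finset.sum_congr rfl fun s' _ => Finset.sum_congr rfl fun a' _ => ?_
    ring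
  rw [tsum_congr hterm]
  have hsa : ∀ (s' : S) (a' : A),
      Summable (fun k : ℕ => (γ * (P s a s' * π s' a'))
        * (γ ^ k * ((expOp P π)^[k] r) s' a')) :=
    fun s' a' => (hsum s' a').mul_left _
  have hswap : (∑' k : ℕ, ∑ s', ∑ a', (γ * (P s a s' * π s' a'))
        * (γ ^ k * ((expOp P π)^[k] r) s' a'))
      = ∑ s', ∑ a', ∑' k : ℕ, (γ * (P s a s' * π s' a'))
        * (γ ^ k * ((expOp P π)^[k] r) s' a') := by
    rw [Summable.tsum_finsetSum (fun s' _ => summable_sum fun a' _ => hsa s' a')]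
    exact Finset.sum_congr rfl fun s' _ => Summable.tsum_finsetSum (fun a' _ => hsa s' a')
  rw [hswap]
  simp only [tsum_mul_left]
  simp only [Vval, Qval, Finset.mul_sum]
  refine Finset.sum_congr rfl fun s' _ => Finset.sum_congr rfl fun a' _ => ?_
  ring

end bellman

section occ
variable {S A : Type*} [Fintype S] [Fintype A] [DecidableEq S]

lemma Pmat_pow_nonneg (P : S → A → S → ℝ) (π : S → A → ℝ)
    (hP0 : ∀ s a s', 0 ≤ P s a s') (hπ0 : ∀ s a, 0 ≤ π s a) :
    ∀ (k : ℕ) (s s' : S), 0 ≤ (Pmat P π ^ k) s s' := by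
  intro k
  induction k with
  | zero =>
    intro s s'
    simp only [pow_zero, Matrix.one_apply]
    split <;> norm_num
  | succ k ih =>
    intro s s'
    rw [pow_succ, Matrix.mul_apply]
    refine Finset.sum_nonneg fun t _ => mul_nonneg (ih s t) ?_
    exact Finset.sum_nonneg fun a _ => mul_nonneg (hπ0 t a) (hP0 t a s')

lemma Pmat_pow_rowsum (P : S → A → S → ℝ) (π : S → A → ℝ)
    (hP1 : ∀ s a, ∑ s', P s a s' = 1) (hπ1 : ∀ s, ∑ a, π s a = 1) :
    ∀ (k : ℕ) (s : S), ∑ s', (Pmat P π ^ k) s s' = 1 := by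
  have h1 : ∀ s : S, ∑ s', Pmat P π s s' = 1 := by
    intro s
    show ∑ s', ∑ a, π s a * P s a s' = 1
    rw [Finset.sum_comm]
    calc ∑ a, ∑ s', π s a * P s a s' = ∑ a, π s a * ∑ s', P s a s' := by
          simp [Finset.mul_sum]
    _ = 1 := by simp [hP1, hπ1]
  intro k
  induction k with
  | zero => intro s; simp [Matrix.one_apply]
  | succ k ih =>
    intro s
    simp only [pow_succ, Matrix.mul_apply]
    rw [Finset.sum_comm]
    calc ∑ t, ∑ s', (Pmat P π ^ k) s t * Pmat P π t s'
        = ∑ t, (Pmat P π ^ k) s t * ∑ s', Pmat P π t s' := by simp [Finset.mul_sum]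
    _ = 1 := by simp only [h1, mul_one]; exact ih s

lemma summable_occ (γ : ℝ) (hγ0 : 0 ≤ γ) (hγ1 : γ < 1)
    (P : S → A → S → ℝ) (π : S → A → ℝ)
    (hP0 : ∀ s a s', 0 ≤ P s a s') (hP1 : ∀ s a, ∑ s', P s a s' = 1)
    (hπ0 : ∀ s a, 0 ≤ π s a) (hπ1 : ∀ s, ∑ a, π s a = 1)
    (d0 : S → ℝ) (hd0 : ∀ s, 0 ≤ d0 s) (hd1 : ∑ s, d0 s = 1) (s : S) :
    Summable (fun k : ℕ => γ ^ k * ∑ s0, d0 s0 * (Pmat P π ^ k) s0 s) := by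
  apply Summable.of_norm_bounded (g := fun k => γ ^ k * 1)
    ((summable_geometric_of_lt_one hγ0 hγ1).mul_right 1)
  intro k
  rw [Real.norm_eq_abs, abs_mul, abs_pow, abs_of_nonneg hγ0]
  refine mul_le_mul_of_nonneg_left ?_ (pow_nonneg hγ0 k)
  have hnn : 0 ≤ ∑ s0, d0 s0 * (Pmat P π ^ k) s0 s :=
    Finset.sum_nonneg fun s0 _ =>
      mul_nonneg (hd0 s0) (Pmat_pow_nonneg P π hP0 hπ0 k s0 s)
  rw [abs_of_nonneg hnn]
  calc ∑ s0, d0 s0 * (Pmat P π ^ k) s0 s ≤ ∑ s0, d0 s0 * 1 := by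
        refine Finset.sum_le_sum fun s0 _ => mul_le_mul_of_nonneg_left ?_ (hd0 s0)
        calc (Pmat P π ^ k) s0 s ≤ ∑ s', (Pmat P π ^ k) s0 s' :=
              Finset.single_le_sum (f := fun s' => (Pmat P π ^ k) s0 s')
                (fun s' _ => Pmat_pow_nonneg P π hP0 hπ0 k s0 s') (Finset.mem_univ s)
        _ = 1 := Pmat_pow_rowsum P π hP1 hπ1 k s0
  _ = 1 := by simp [hd1]

lemma occup_bellman (γ : ℝ) (hγ0 : 0 ≤ γ) (hγ1 : γ < 1)
    (P : S → A → S → ℝ) (π : S → A → ℝ)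
    (hP0 : ∀ s a s', 0 ≤ P s a s') (hP1 : ∀ s a, ∑ s', P s a s' = 1)
    (hπ0 : ∀ s a, 0 ≤ π s a) (hπ1 : ∀ s, ∑ a, π s a = 1)
    (d0 : S → ℝ) (hd0 : ∀ s, 0 ≤ d0 s) (hd1 : ∑ s, d0 s = 1) (s : S) :
    occup γ P π d0 s = d0 s + γ * ∑ s', occup γ P π d0 s' * Pmat P π s' s := by
  have hsum : ∀ s : S, Summable (fun k : ℕ => γ ^ k * ∑ s0, d0 s0 * (Pmat P π ^ k) s0 s) :=
    fun s => summable_occ γ hγ0 hγ1 P π hP0 hP1 hπ0 hπ1 d0 hd0 hd1 s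
  have h0 : occup γ P π d0 s
      = d0 s + ∑' k : ℕ, γ ^ (k + 1) * ∑ s0, d0 s0 * (Pmat P π ^ (k + 1)) s0 s := by
    rw [show occup γ P π d0 s = ∑' k : ℕ, γ ^ k * ∑ s0, d0 s0 * (Pmat P π ^ k) s0 s from rfl,
      Summable.tsum_eq_zero_add (hsum s)]
    congr 1
    simp [Matrix.one_apply, Finset.sum_ite_eq']
  rw [h0]
  congr 1
  have hterm : ∀ k : ℕ, γ ^ (k + 1) * ∑ s0, d0 s0 * (Pmat P π ^ (k + 1)) s0 s
      = ∑ s', (γ * Pmat P π s' s) * (γ ^ k * ∑ s0, d0 s0 * (Pmat P π ^ k) s0 s') := by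
    intro k
    simp only [pow_succ, Matrix.mul_apply, Finset.mul_sum, Finset.sum_mul]
    rw [Finset.sum_comm]
    refine Finset.sum_congr rfl fun s' _ => Finset.sum_congr rfl fun s0 _ => ?_
    ring
  rw [tsum_congr hterm]
  rw [Summable.tsum_finsetSum (fun s' _ => (hsum s').mul_left _)]
  simp only [tsum_mul_left]
  rw [Finset.mul_sum]
  refine Finset.sum_congr rfl fun s' _ => ?_
  show (γ * Pmat P π s' s) * occup γ P π d0 s' = γ * (occup γ P π d0 s' * Pmat P π s' s)
  ring

end occ

lemma pol_swap {S A : Type*} [Fintype S] [Fintype A]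
    (P : S → A → S → ℝ) (π : S → A → ℝ) (V : S → ℝ) (s : S) :
    ∑ a, π s a * ∑ s', P s a s' * V s' = ∑ s', Pmat P π s s' * V s' := by
  calc ∑ a, π s a * ∑ s', P s a s' * V s'
      = ∑ a, ∑ s', π s a * (P s a s' * V s') := by simp [Finset.mul_sum]
  _ = ∑ s', ∑ a, π s a * (P s a s' * V s') := Finset.sum_comm
  _ = ∑ s', Pmat P π s s' * V s' := by
      refine Finset.sum_congr rfl fun s' _ => ?_
      show _ = (∑ a, π s a * P s a s') * V s'
      rw [Finset.sum_mul]
      exact Finset.sum_congr rfl fun a _ => by ring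

/-- Performance difference identity.  For stationary policies `π_new`, `π_old`
on a finite MDP with discount `γ ∈ [0,1)` and initial distribution `d₀`,
`J(π_new) = J(π_old) + ∑_s ρ_{π_new}(s) ∑_a π_new(a|s) A^{π_old}(s,a)`,
where `ρ_{π_new}(s) = ∑_{t≥0} γ^t Pr(s_t = s under π_new, s₀ ∼ d₀)` is the discounted
occupancy measure (this is the trajectory form
`J(π_new) = J(π_old) + E_{τ∼π_new}[∑_t γ^t A^{π_old}(s_t,a_t)]` written out). -/
theorem performance_difference {S A : Type*} [Fintype S] [Fintype A] [DecidableEq S]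
    (γ : ℝ) (hγ0 : 0 ≤ γ) (hγ1 : γ < 1)
    (P : S → A → S → ℝ) (hP0 : ∀ s a s', 0 ≤ P s a s') (hP1 : ∀ s a, ∑ s', P s a s' = 1)
    (πnew πold : S → A → ℝ)
    (hn0 : ∀ s a, 0 ≤ πnew s a) (hn1 : ∀ s, ∑ a, πnew s a = 1)
    (ho0 : ∀ s a, 0 ≤ πold s a) (ho1 : ∀ s, ∑ a, πold s a = 1)
    (r : S → A → ℝ)
    (d0 : S → ℝ) (hd0 : ∀ s, 0 ≤ d0 s) (hd1 : ∑ s, d0 s = 1) :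
    Jfun γ P πnew r d0
      = Jfun γ P πold r d0
        + ∑ s, occup γ P πnew d0 s * ∑ a, πnew s a * Adv γ P πold r s a := by
  let ρ : S → ℝ := occup γ P πnew d0
  let M : Matrix S S ℝ := Pmat P πnew
  let Vo : S → ℝ := Vval γ P πold r
  let Vn : S → ℝ := Vval γ P πnew r
  let rb : S → ℝ := fun s => ∑ a, πnew s a * r s a
  -- occupancy fixed point
  have hfix : ∀ s, ρ s - d0 s = γ * ∑ s', ρ s' * M s' s := by
    intro s
    show occup γ P πnew d0 s - d0 s = γ * ∑ s', occup γ P πnew d0 s' * Pmat P πnew s' s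
    rw [occup_bellman γ hγ0 hγ1 P πnew hP0 hP1 hn0 hn1 d0 hd0 hd1 s]
    ring
  -- key adjoint identity
  have key : ∀ V : S → ℝ,
      ∑ s, ρ s * (γ * ∑ s', M s s' * V s') = ∑ s, (ρ s - d0 s) * V s := by
    intro V
    have h1 : ∀ s, (ρ s - d0 s) * V s = ∑ s', γ * (ρ s' * (M s' s * V s)) := by
      intro s
      rw [hfix s, Finset.mul_sum, Finset.sum_mul]
      refine Finset.sum_congr rfl fun s' _ => ?_
      ring
    rw [Finset.sum_congr rfl fun s _ => h1 s, Finset.sum_comm]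
    refine Finset.sum_congr rfl fun s _ => ?_
    rw [Finset.mul_sum, Finset.mul_sum]
    refine Finset.sum_congr rfl fun s' _ => ?_
    ring
  -- Bellman for V_new
  have hVn_bell : ∀ s, rb s = Vn s - γ * ∑ s', M s s' * Vn s' := by
    intro s
    have hQ : ∀ a, Qval γ P πnew r s a = r s a + γ * ∑ s', P s a s' * Vn s' :=
      fun a => Qval_bellman γ hγ0 hγ1 P πnew hP0 hP1 hn0 hn1 r s a
    have h2 : Vn s = rb s + γ * ∑ s', M s s' * Vn s' := by
      calc Vn s = ∑ a, πnew s a * (r s a + γ * ∑ s', P s a s' * Vn s') :=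
            Finset.sum_congr rfl fun a _ => by rw [← hQ a]
      _ = ∑ a, (πnew s a * r s a + γ * (πnew s a * ∑ s', P s a s' * Vn s')) :=
            Finset.sum_congr rfl fun a _ => by ring
      _ = rb s + γ * ∑ a, πnew s a * ∑ s', P s a s' * Vn s' := by
            rw [Finset.sum_add_distrib, ← Finset.mul_sum]
      _ = rb s + γ * ∑ s', M s s' * Vn s' := by rw [pol_swap]
    linarith [h2]
  -- the advantage term
  have hAdv : ∀ s, ∑ a, πnew s a * Adv γ P πold r s a
      = rb s + (γ * ∑ s', M s s' * Vo s' - Vo s) := by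
    intro s
    have hQ : ∀ a, Qval γ P πold r s a = r s a + γ * ∑ s', P s a s' * Vo s' :=
      fun a => Qval_bellman γ hγ0 hγ1 P πold hP0 hP1 ho0 ho1 r s a
    calc ∑ a, πnew s a * Adv γ P πold r s a
        = ∑ a, (πnew s a * r s a
            + (γ * (πnew s a * ∑ s', P s a s' * Vo s') - πnew s a * Vo s)) := by
          refine Finset.sum_congr rfl fun a _ => ?_
          show πnew s a * (Qval γ P πold r s a - Vo s) = _
          rw [hQ a]; ring
    _ = rb s + (γ * ∑ a, πnew s a * ∑ s', P s a s' * Vo s'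
          - (∑ a, πnew s a) * Vo s) := by
          rw [Finset.sum_add_distrib, Finset.sum_sub_distrib, ← Finset.mul_sum,
            ← Finset.sum_mul]
    _ = rb s + (γ * ∑ s', M s s' * Vo s' - Vo s) := by rw [pol_swap, hn1 s, one_mul]
  -- ∑ ρ rb = J(new)
  have hρrb : ∑ s, ρ s * rb s = ∑ s, d0 s * Vn s := by
    calc ∑ s, ρ s * rb s
        = ∑ s, (ρ s * Vn s - ρ s * (γ * ∑ s', M s s' * Vn s')) := by
          refine Finset.sum_congr rfl fun s _ => ?_
          rw [hVn_bell s]; ring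
    _ = ∑ s, ρ s * Vn s - ∑ s, ρ s * (γ * ∑ s', M s s' * Vn s') :=
          Finset.sum_sub_distrib _ _
    _ = ∑ s, ρ s * Vn s - ∑ s, (ρ s - d0 s) * Vn s := by rw [key Vn]
    _ = ∑ s, d0 s * Vn s := by
          rw [← Finset.sum_sub_distrib]
          exact Finset.sum_congr rfl fun s _ => by ring
  -- assemble
  have hD : ∑ s, ρ s * ∑ a, πnew s a * Adv γ P πold r s a
      = ∑ s, d0 s * Vn s - ∑ s, d0 s * Vo s := by
    calc ∑ s, ρ s * ∑ a, πnew s a * Adv γ P πold r s a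
        = ∑ s, (ρ s * rb s + (ρ s * (γ * ∑ s', M s s' * Vo s') - ρ s * Vo s)) := by
          refine Finset.sum_congr rfl fun s _ => ?_
          rw [hAdv s]; ring
    _ = ∑ s, ρ s * rb s
          + (∑ s, ρ s * (γ * ∑ s', M s s' * Vo s') - ∑ s, ρ s * Vo s) := by
          rw [Finset.sum_add_distrib, Finset.sum_sub_distrib]
    _ = ∑ s, d0 s * Vn s + (∑ s, (ρ s - d0 s) * Vo s - ∑ s, ρ s * Vo s) := by
          rw [hρrb, key Vo]
    _ = ∑ s, d0 s * Vn s - ∑ s, d0 s * Vo s := by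
          have h3 : ∑ x, ((ρ x - d0 x) * Vo x - ρ x * Vo x)
              = ∑ x, -(d0 x * Vo x) :=
            Finset.sum_congr rfl fun x _ => by ring
          rw [← Finset.sum_sub_distrib, h3, Finset.sum_neg_distrib]
          ring
  show ∑ s, d0 s * Vn s = ∑ s, d0 s * Vo s + ∑ s, ρ s * ∑ a, πnew s a * Adv γ P πold r s a
  rw [hD]
  ring
end

section
/- Monotonic improvement guarantee of conservative policy iteration: with M_i(π) = L_{π_i}(π) − C · D_KL^max(π, π_i) where C = 4εγ/(1−γ)², the bound |J(π) − L_{π_i}(π)| ≤ C · D_KL^max(π, π_i)² (with D_KL^max ≤ 1, or stated with the squared term) implies J(π_{i+1}) − J(π_i) ≥ M_i(π_{i+1}) − M_i(π_i) whenever π_{i+1} maximizes M_i. In particular, since M_i(π_i) = J(π_i), the sequence J(π_0) ≤ J(π_1) ≤ J(π_2) ≤ … is monotonically nondecreasing. -/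
open scoped BigOperators

/-- Kullback–Leibler divergence between two finitely supported distributions. -/
noncomputable def KLdiv {A : Type*} [Fintype A] (p q : A → ℝ) : ℝ :=
  ∑ a, p a * Real.log (p a / q a)

/-- `D_KL^max(π, π') = max_s D_KL(π(·|s) ‖ π'(·|s))`. -/
noncomputable def DKLmax {S A : Type*} [Fintype A] [Fintype S] [Nonempty S]
    (π π' : S → A → ℝ) : ℝ :=
  ⨆ s, KLdiv (π s) (π' s)

/-- The local (surrogate) approximation
`L_{π_base}(π) = J(π_base) + ∑_s ρ_{π_base}(s) ∑_a π(a|s) A^{π_base}(s,a)`. -/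
noncomputable def Lsur {S A : Type*} [Fintype S] [Fintype A] [DecidableEq S]
    (γ : ℝ) (P : S → A → S → ℝ) (r : S → A → ℝ) (d0 : S → ℝ)
    (πbase π : S → A → ℝ) : ℝ :=
  Jfun γ P πbase r d0 + ∑ s, occup γ P πbase d0 s * ∑ a, π s a * Adv γ P πbase r s a

/-!
Minorize–maximize: `M_i(π) = L_{π_i}(π) − C·D_KL^max(π, π_i)²` is a lower bound for `J` that is
tight at `π_i`, because `π_i` has zero average advantage under itself and `D_KL^max(π_i, π_i) = 0`.
Hence `J(π_{i+1}) ≥ M_i(π_{i+1}) ≥ M_i(π_i) = J(π_i)`.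
-/

theorem KLdiv_self {A : Type*} [Fintype A] (p : A → ℝ) : KLdiv p p = 0 := by
  refine Finset.sum_eq_zero fun a _ => ?_
  rcases eq_or_ne (p a) 0 with h | h
  · rw [h, zero_mul]
  · rw [div_self h, Real.log_one, mul_zero]

theorem DKLmax_self {S A : Type*} [Fintype A] [Fintype S] [Nonempty S] (π : S → A → ℝ) :
    DKLmax π π = 0 := by
  simp only [DKLmax, KLdiv_self, ciSup_const]

theorem sum_mul_Adv_self_eq_zero {S A : Type*} [Fintype S] [Fintype A]
    (γ : ℝ) (P : S → A → S → ℝ) (r : S → A → ℝ) (π : S → A → ℝ) (s : S)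
    (hπ : ∑ a, π s a = 1) :
    ∑ a, π s a * Adv γ P π r s a = 0 := by
  simp only [Adv, mul_sub, Finset.sum_sub_distrib, ← Finset.sum_mul, hπ, one_mul, Vval, sub_self]

theorem Lsur_self {S A : Type*} [Fintype S] [Fintype A] [DecidableEq S]
    (γ : ℝ) (P : S → A → S → ℝ) (r : S → A → ℝ) (d0 : S → ℝ) (π : S → A → ℝ)
    (hπ : ∀ s, ∑ a, π s a = 1) :
    Lsur γ P r d0 π π = Jfun γ P π r d0 := by
  simp only [Lsur, sum_mul_Adv_self_eq_zero γ P r π _ (hπ _), mul_zero, Finset.sum_const_zero,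
    add_zero]

theorem Lsur_sub_DKLmax_self {S A : Type*} [Fintype S] [Fintype A] [DecidableEq S] [Nonempty S]
    (γ : ℝ) (P : S → A → S → ℝ) (r : S → A → ℝ) (d0 : S → ℝ) (C : ℝ) (π : S → A → ℝ)
    (hπ : ∀ s, ∑ a, π s a = 1) :
    Lsur γ P r d0 π π - C * DKLmax π π ^ 2 = Jfun γ P π r d0 := by
  rw [Lsur_self γ P r d0 π hπ, DKLmax_self]
  ring

theorem cpi_monotonic_improvement_general
    {S A : Type*} [Fintype S] [Fintype A] [DecidableEq S] [Nonempty S]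
    (γ : ℝ) (P : S → A → S → ℝ) (r : S → A → ℝ) (d0 : S → ℝ) (C : ℝ)
    (πseq : ℕ → S → A → ℝ)
    (hπ0 : ∀ i s a, 0 < πseq i s a) (hπ1 : ∀ i s, ∑ a, πseq i s a = 1)
    (hlb : ∀ i (π : S → A → ℝ), (∀ s a, 0 < π s a) → (∀ s, ∑ a, π s a = 1) →
      Lsur γ P r d0 (πseq i) π - C * DKLmax π (πseq i) ^ 2 ≤ Jfun γ P π r d0)
    (hmax : ∀ i (π : S → A → ℝ), (∀ s a, 0 < π s a) → (∀ s, ∑ a, π s a = 1) →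
      Lsur γ P r d0 (πseq i) π - C * DKLmax π (πseq i) ^ 2
        ≤ Lsur γ P r d0 (πseq i) (πseq (i + 1))
            - C * DKLmax (πseq (i + 1)) (πseq i) ^ 2) :
    (∀ i, (Lsur γ P r d0 (πseq i) (πseq (i + 1))
            - C * DKLmax (πseq (i + 1)) (πseq i) ^ 2)
          - (Lsur γ P r d0 (πseq i) (πseq i)
            - C * DKLmax (πseq i) (πseq i) ^ 2)
        ≤ Jfun γ P (πseq (i + 1)) r d0 - Jfun γ P (πseq i) r d0) ∧
    Monotone (fun i => Jfun γ P (πseq i) r d0) := by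
  have htight := fun i => Lsur_sub_DKLmax_self γ P r d0 C (πseq i) (hπ1 i)
  have hminorant := fun i => hlb i (πseq (i + 1)) (hπ0 (i + 1)) (hπ1 (i + 1))
  refine ⟨fun i => ?_, monotone_nat_of_le_succ fun i => ?_⟩
  · linarith [hminorant i, htight i]
  · linarith [hminorant i, hmax i (πseq i) (hπ0 i) (hπ1 i), htight i]

/-- Monotonic improvement guarantee of conservative policy iteration.  With
`M_i(π) = L_{π_i}(π) − C · D_KL^max(π, π_i)²`, assuming the lower bound
`J(π) ≥ L_{π_i}(π) − C · D_KL^max(π, π_i)²` for all (stochastic) policies `π`, if each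
`π_{i+1}` maximizes `M_i` then `J(π_{i+1}) − J(π_i) ≥ M_i(π_{i+1}) − M_i(π_i)`, and since
`M_i(π_i) = J(π_i)` the sequence `J(π_0) ≤ J(π_1) ≤ J(π_2) ≤ …` is monotonically
nondecreasing. -/
theorem cpi_monotonic_improvement
    {S A : Type*} [Fintype S] [Fintype A] [DecidableEq S] [Nonempty S] [Nonempty A]
    (γ : ℝ) (hγ0 : 0 ≤ γ) (hγ1 : γ < 1)
    (P : S → A → S → ℝ) (hP0 : ∀ s a s', 0 ≤ P s a s') (hP1 : ∀ s a, ∑ s', P s a s' = 1)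
    (r : S → A → ℝ)
    (d0 : S → ℝ) (hd0 : ∀ s, 0 ≤ d0 s) (hd1 : ∑ s, d0 s = 1)
    (C : ℝ) (hC : 0 ≤ C)
    (πseq : ℕ → S → A → ℝ)
    (hπ0 : ∀ i s a, 0 < πseq i s a) (hπ1 : ∀ i s, ∑ a, πseq i s a = 1)
    (hlb : ∀ i (π : S → A → ℝ), (∀ s a, 0 < π s a) → (∀ s, ∑ a, π s a = 1) →
      Lsur γ P r d0 (πseq i) π - C * DKLmax π (πseq i) ^ 2 ≤ Jfun γ P π r d0)
    (hmax : ∀ i (π : S → A → ℝ), (∀ s a, 0 < π s a) → (∀ s, ∑ a, π s a = 1) →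
      Lsur γ P r d0 (πseq i) π - C * DKLmax π (πseq i) ^ 2
        ≤ Lsur γ P r d0 (πseq i) (πseq (i + 1))
            - C * DKLmax (πseq (i + 1)) (πseq i) ^ 2) :
    (∀ i, (Lsur γ P r d0 (πseq i) (πseq (i + 1))
            - C * DKLmax (πseq (i + 1)) (πseq i) ^ 2)
          - (Lsur γ P r d0 (πseq i) (πseq i)
            - C * DKLmax (πseq i) (πseq i) ^ 2)
        ≤ Jfun γ P (πseq (i + 1)) r d0 - Jfun γ P (πseq i) r d0) ∧
    Monotone (fun i => Jfun γ P (πseq i) r d0) :=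
  cpi_monotonic_improvement_general γ P r d0 C πseq hπ0 hπ1 hlb hmax
end
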